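/- Any loop-free FMC term M that is typed in the empty context, ⊢ M : !!s => !!t_I, where the type is zero-free (every sum type occurring in it is indexed by a nonempty finite set of choices), is terminating: there exist memories S_A, T_A and a choice i such that (S_A, M) ⇓ (T_A, i). -/

import Mathlib

variable {Loc Ch : Type}

/-- FMC terms: variable, push `[N]a.M`, pop `a<x>.M` (de Bruijn binder),
choice `i`, case `M ; i -> N`, and loop `M^i`. -/
inductive Tm (Loc Ch : Type) : Type where
  | var : ℕ → Tm Loc Ch
  | push : Tm Loc Ch → Loc → Tm Loc Ch → Tm Loc Ch
  | pop : Loc → Tm Loc Ch → Tm Loc Ch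
  | choice : Ch → Tm Loc Ch
  | caseOf : Tm Loc Ch → Ch → Tm Loc Ch → Tm Loc Ch
  | loop : Tm Loc Ch → Ch → Tm Loc Ch

namespace Tm

/-- Shift the free de Bruijn indices `≥ d` up by one. -/
def lift : Tm Loc Ch → ℕ → Tm Loc Ch
  | var n, d => if n < d then var n else var (n + 1)
  | push N a M, d => push (N.lift d) a (M.lift d)
  | pop a M, d => pop a (M.lift (d + 1))
  | choice i, _ => choice i
  | caseOf M i N, d => caseOf (M.lift d) i (N.lift d)
  | loop M i, d => loop (M.lift d) i

/-- Capture-avoiding substitution `{N/k}M` for the de Bruijn index `k`. -/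
def subst : Tm Loc Ch → ℕ → Tm Loc Ch → Tm Loc Ch
  | var n, k, N => if n = k then N else if n < k then var n else var (n - 1)
  | push P a M, k, N => push (P.subst k N) a (M.subst k N)
  | pop a M, k, N => pop a (M.subst (k + 1) (N.lift 0))
  | choice i, _, _ => choice i
  | caseOf M i P, k, N => caseOf (M.subst k N) i (P.subst k N)
  | loop M i, k, N => loop (M.subst k N) i

end Tm

/-- A term is loop-free if it contains no subterm of the form `M^i`. -/
def Tm.loopFree : Tm Loc Ch → Prop
  | .var _ => True
  | .push N _ M => N.loopFree ∧ M.loopFree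
  | .pop _ M => M.loopFree
  | .choice _ => True
  | .caseOf M _ N => M.loopFree ∧ N.loopFree
  | .loop _ _ => False

variable [DecidableEq Loc]

/-- A memory: a family of stacks of terms indexed by the locations
(stacks are lists with the head as top). -/
def Mem (Loc Ch : Type) := Loc → List (Tm Loc Ch)

/-- `S.push a N` pushes `N` onto the stack at location `a`. -/
def Mem.push (S : Mem Loc Ch) (a : Loc) (N : Tm Loc Ch) : Mem Loc Ch :=
  Function.update S a (N :: S a)

/-- The empty memory. -/
def Mem.empty : Mem Loc Ch := fun _ => []

/-- Big-step evaluation `(S, M) ⇓ (T, i)`. -/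
inductive Eval : Mem Loc Ch → Tm Loc Ch → Mem Loc Ch → Ch → Prop where
  | choice (S : Mem Loc Ch) (i : Ch) : Eval S (.choice i) S i
  | push (S : Mem Loc Ch) (N : Tm Loc Ch) (a : Loc) (M : Tm Loc Ch) (T : Mem Loc Ch) (i : Ch) :
      Eval (S.push a N) M T i → Eval S (.push N a M) T i
  | pop (S : Mem Loc Ch) (a : Loc) (N M : Tm Loc Ch) (T : Mem Loc Ch) (i : Ch) :
      Eval S (M.subst 0 N) T i → Eval (S.push a N) (.pop a M) T i
  | case_eq (R S T : Mem Loc Ch) (M N : Tm Loc Ch) (i j : Ch) :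
      Eval R M S i → Eval S N T j → Eval R (.caseOf M i N) T j
  | case_ne (R T : Mem Loc Ch) (M N : Tm Loc Ch) (i j : Ch) (h : i ≠ j) :
      Eval R M T i → Eval R (.caseOf M j N) T i
  | loop_eq (R S T : Mem Loc Ch) (M : Tm Loc Ch) (i j : Ch) :
      Eval R M S i → Eval S (.loop M i) T j → Eval R (.loop M i) T j
  | loop_ne (R T : Mem Loc Ch) (M : Tm Loc Ch) (i j : Ch) (h : i ≠ j) :
      Eval R M T i → Eval R (.loop M j) T i

variable [DecidableEq Ch]

/-- Types `!!s => !!t_I`: an implication from a memory type (family of stack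
types indexed by locations) to a sum type (family of memory types indexed
by a set of choices, represented via `Option`). -/
inductive Ty (Loc Ch : Type) : Type where
  | arr : (Loc → List (Ty Loc Ch)) → (Ch → Option (Loc → List (Ty Loc Ch))) → Ty Loc Ch

/-- Stack types: lists of types (head = top of stack). -/
abbrev StackTy (Loc Ch : Type) := List (Ty Loc Ch)

/-- Memory types: families of stack types indexed by locations. -/
abbrev MemTy (Loc Ch : Type) := Loc → StackTy Loc Ch

/-- Sum types: families of memory types indexed by a set of choices
(`T i = some m` means `i` is in the index set with memory type `m`). -/
abbrev SumTy (Loc Ch : Type) := Ch → Option (MemTy Loc Ch)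

/-- The empty memory type `ε`. -/
def memNil : MemTy Loc Ch := fun _ => []

/-- `memCons a r s` is `a(r)·!!s`: push the type `r` on top at location `a`. -/
def memCons [DecidableEq Loc] (a : Loc) (r : Ty Loc Ch) (s : MemTy Loc Ch) : MemTy Loc Ch :=
  Function.update s a (r :: s a)

/-- Pointwise concatenation of memory types (`r` on top of `s`). -/
def memApp (r s : MemTy Loc Ch) : MemTy Loc Ch := fun a => r a ++ s a

/-- The singleton sum type `!!m.i`. -/
def sumSingle [DecidableEq Ch] (i : Ch) (m : MemTy Loc Ch) : SumTy Loc Ch :=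
  fun j => if j = i then some m else none

/-- Stack expansion of a sum type: place `s` underneath every summand. -/
def sumExpand (s : MemTy Loc Ch) (T : SumTy Loc Ch) : SumTy Loc Ch :=
  fun i => (T i).map fun m => memApp m s

/-- `sumOver S T` is the sum `!!s_I + !!t_{J∖I}`: `S` overriding `T`. -/
def sumOver (S T : SumTy Loc Ch) : SumTy Loc Ch :=
  fun i => match S i with
    | some m => some m
    | none => T i

variable [DecidableEq Loc] [DecidableEq Ch]

/-- The typing judgement `Γ ⊢ M : t` of the simply-typed FMC with control,
with de Bruijn contexts (lists of types). -/
inductive Typing : List (Ty Loc Ch) → Tm Loc Ch → Ty Loc Ch → Prop where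
  | var (Γ : List (Ty Loc Ch)) (n : ℕ) (t : Ty Loc Ch) (h : Γ[n]? = some t) :
      Typing Γ (.var n) t
  | choice (Γ : List (Ty Loc Ch)) (i : Ch) :
      Typing Γ (.choice i) (.arr memNil (sumSingle i memNil))
  | push (Γ : List (Ty Loc Ch)) (N : Tm Loc Ch) (r : Ty Loc Ch) (a : Loc)
      (M : Tm Loc Ch) (s : MemTy Loc Ch) (T : SumTy Loc Ch) :
      Typing Γ N r → Typing Γ M (.arr (memCons a r s) T) →
      Typing Γ (.push N a M) (.arr s T)
  | pop (Γ : List (Ty Loc Ch)) (r : Ty Loc Ch) (a : Loc) (M : Tm Loc Ch)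
      (s : MemTy Loc Ch) (T : SumTy Loc Ch) :
      Typing (r :: Γ) M (.arr s T) →
      Typing Γ (.pop a M) (.arr (memCons a r s) T)
  | caseOf (Γ : List (Ty Loc Ch)) (M N : Tm Loc Ch) (i : Ch)
      (r s : MemTy Loc Ch) (T : SumTy Loc Ch) :
      Typing Γ M (.arr r (Function.update T i (some s))) →
      Typing Γ N (.arr s T) →
      Typing Γ (.caseOf M i N) (.arr r T)
  | loop (Γ : List (Ty Loc Ch)) (M : Tm Loc Ch) (i : Ch)
      (s : MemTy Loc Ch) (T : SumTy Loc Ch) (h : T i = none) :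
      Typing Γ M (.arr s (Function.update T i (some s))) →
      Typing Γ (.loop M i) (.arr s T)
  | expand (Γ : List (Ty Loc Ch)) (M : Tm Loc Ch)
      (r s : MemTy Loc Ch) (T : SumTy Loc Ch) :
      Typing Γ M (.arr r T) →
      Typing Γ M (.arr (memApp r s) (sumExpand s T))
  | incl (Γ : List (Ty Loc Ch)) (M : Tm Loc Ch) (r : MemTy Loc Ch)
      (T U : SumTy Loc Ch) (h : ∀ i, T i = none ∨ U i = none) :
      Typing Γ M (.arr r T) →
      Typing Γ M (.arr r (sumOver T U))

/-- A type is OK if it conforms to the grammar (all memory types and sum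
types are finitely supported) and is zero-free (every sum type occurring in
it is indexed by a nonempty set of choices). -/
inductive TyOK : Ty Loc Ch → Prop where
  | arr (s : MemTy Loc Ch) (T : SumTy Loc Ch)
      (hs1 : {a | s a ≠ []}.Finite)
      (hs2 : ∀ a, ∀ t ∈ s a, TyOK t)
      (hT0 : ∃ i, T i ≠ none)
      (hT1 : {i | T i ≠ none}.Finite)
      (hT2 : ∀ i m, T i = some m → {a | m a ≠ []}.Finite)
      (hT3 : ∀ i m, T i = some m → ∀ a, ∀ t ∈ m a, TyOK t) :
      TyOK (.arr s T)

/-!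
Tait-style reducibility. A closed term of type `!!s => !!t_I` is reducible if, on any memory
whose top part consists of reducible terms of the types `!!s`, it evaluates to some choice
`i ∈ I`, leaving reducible terms of the types `!!t_i` on top of the untouched rest of the memory.
Every typing rule except the loop rule preserves reducibility under closing substitutions, so
loop-free typed terms are reducible. Zero-freeness makes every type inhabited by a reducible
term (pop the input, then push reducible inhabitants of one summand of the output), so a
reducible term can be run on a memory of reducible inputs, and it terminates there.
-/

set_option linter.unusedSectionVars false
set_option linter.overlappingInstances false

namespace Tm

def FreeLt : Tm Loc Ch → ℕ → Prop
  | var n, k => n < k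
  | push N _ M, k => N.FreeLt k ∧ M.FreeLt k
  | pop _ M, k => M.FreeLt (k + 1)
  | choice _, _ => True
  | caseOf M _ N, k => M.FreeLt k ∧ N.FreeLt k
  | loop M _, k => M.FreeLt k

theorem FreeLt.mono {M : Tm Loc Ch} {k k' : ℕ} (h : M.FreeLt k) (hk : k ≤ k') : M.FreeLt k' := by
  induction M generalizing k k' with
  | var n => exact lt_of_lt_of_le h hk
  | pop a M ih => exact ih h (by omega)
  | choice => trivial
  | push _ _ _ ih₁ ih₂ | caseOf _ _ _ ih₁ ih₂ => exact ⟨ih₁ h.1 hk, ih₂ h.2 hk⟩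
  | loop M i ih => exact ih h hk

theorem lift_eq_self {M : Tm Loc Ch} {k d : ℕ} (h : M.FreeLt k) (hk : k ≤ d) : M.lift d = M := by
  induction M generalizing k d with
  | var n => simp [lift, lt_of_lt_of_le (show n < k from h) hk]
  | pop a M ih => simp [lift, ih h (Nat.succ_le_succ hk)]
  | choice => rfl
  | push _ _ _ ih₁ ih₂ | caseOf _ _ _ ih₁ ih₂ => simp [lift, ih₁ h.1 hk, ih₂ h.2 hk]
  | loop M i ih => simp [lift, ih h hk]

theorem subst_eq_self {M : Tm Loc Ch} {k d : ℕ} (N : Tm Loc Ch) (h : M.FreeLt k) (hk : k ≤ d) :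
    M.subst d N = M := by
  induction M generalizing k d N with
  | var n =>
    have : n < d := lt_of_lt_of_le h hk
    simp [subst, this, this.ne]
  | pop a M ih => simp [subst, ih _ h (Nat.succ_le_succ hk)]
  | choice => rfl
  | push _ _ _ ih₁ ih₂ | caseOf _ _ _ ih₁ ih₂ => simp [subst, ih₁ _ h.1 hk, ih₂ _ h.2 hk]
  | loop M i ih => simp [subst, ih _ h hk]

theorem lift_zero_eq_self {N : Tm Loc Ch} (h : N.FreeLt 0) : N.lift 0 = N :=
  lift_eq_self h le_rfl

theorem FreeLt.subst {M N : Tm Loc Ch} {k d : ℕ} (hM : M.FreeLt (d + 1)) (hN : N.FreeLt 0)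
    (hk : k ≤ d) : (M.subst k N).FreeLt d := by
  induction M generalizing k d with
  | var n =>
    simp only [Tm.subst]
    split_ifs
    · exact hN.mono (Nat.zero_le d)
    all_goals (simp only [FreeLt] at hM ⊢; omega)
  | pop a M ih =>
    simp only [Tm.subst, lift_zero_eq_self hN]
    exact ih hM (by omega)
  | choice => trivial
  | push _ _ _ ih₁ ih₂ | caseOf _ _ _ ih₁ ih₂ => exact ⟨ih₁ hM.1 hk, ih₂ hM.2 hk⟩
  | loop M i ih => exact ih hM hk

theorem subst_succ_subst {N P : Tm Loc Ch} (M : Tm Loc Ch) (k : ℕ) (hN : N.FreeLt 0)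
    (hP : P.FreeLt 0) : (M.subst (k + 1) P).subst k N = (M.subst k N).subst k P := by
  induction M generalizing k with
  | var n =>
    rcases lt_trichotomy n k with h | rfl | h
    · simp [subst, h, h.ne, Nat.lt_succ_of_lt h, (Nat.lt_succ_of_lt h).ne]
    · simp [subst, subst_eq_self P hN (Nat.zero_le n)]
    · rcases (Nat.succ_le_of_lt h).eq_or_lt with rfl | h'
      · simp [subst, subst_eq_self N hP (Nat.zero_le k)]
      · have : ¬ n - 1 < k := by omega
        simp [subst, h'.ne', h.ne', h.not_gt, h'.not_gt, this, show n - 1 ≠ k by omega]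
  | pop a M ih => simp [subst, lift_zero_eq_self hN, lift_zero_eq_self hP, ih]
  | choice => rfl
  | push _ _ _ ih₁ ih₂ | caseOf _ _ _ ih₁ ih₂ => simp [subst, ih₁, ih₂]
  | loop M i ih => simp [subst, ih]

/-- Each substitution at `k` lowers the indices above `k`, so the terms of `σ` replace the
indices `k, k + 1, …` in turn. -/
def substList (M : Tm Loc Ch) (k : ℕ) (σ : List (Tm Loc Ch)) : Tm Loc Ch :=
  σ.foldl (fun M N => M.subst k N) M

variable {k : ℕ} {σ : List (Tm Loc Ch)}

theorem substList_cons (M N : Tm Loc Ch) : M.substList k (N :: σ) = (M.subst k N).substList k σ :=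
  rfl

theorem substList_eq_self {M : Tm Loc Ch} (h : M.FreeLt k) : M.substList k σ = M := by
  induction σ with
  | nil => rfl
  | cons N σ ih => rw [substList_cons, subst_eq_self N h le_rfl, ih]

@[simp] theorem substList_choice (i : Ch) : (choice i).substList k σ = choice i :=
  substList_eq_self trivial

@[simp] theorem substList_push (N : Tm Loc Ch) (a : Loc) (M : Tm Loc Ch) :
    (push N a M).substList k σ = push (N.substList k σ) a (M.substList k σ) := by
  induction σ generalizing N M with
  | nil => rfl
  | cons P σ ih => exact ih _ _

@[simp] theorem substList_caseOf (M : Tm Loc Ch) (i : Ch) (N : Tm Loc Ch) :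
    (caseOf M i N).substList k σ = caseOf (M.substList k σ) i (N.substList k σ) := by
  induction σ generalizing M N with
  | nil => rfl
  | cons P σ ih => exact ih _ _

theorem substList_pop (a : Loc) (M : Tm Loc Ch) (hσ : ∀ N ∈ σ, N.FreeLt 0) :
    (pop a M).substList k σ = pop a (M.substList (k + 1) σ) := by
  induction σ generalizing M with
  | nil => rfl
  | cons P σ ih =>
    simp only [List.mem_cons, forall_eq_or_imp] at hσ
    simp only [substList_cons, subst, lift_zero_eq_self hσ.1]
    exact ih _ hσ.2

theorem subst_substList (M N : Tm Loc Ch) (hN : N.FreeLt 0) (hσ : ∀ P ∈ σ, P.FreeLt 0) :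
    (M.substList (k + 1) σ).subst k N = M.substList k (N :: σ) := by
  induction σ generalizing M with
  | nil => rfl
  | cons P σ ih =>
    simp only [List.mem_cons, forall_eq_or_imp] at hσ
    rw [substList_cons, ih _ hσ.2, substList_cons, substList_cons, substList_cons,
      subst_succ_subst M k hN hσ.1]

theorem substList_var {n : ℕ} (hn : n < σ.length) (hσ : ∀ P ∈ σ, P.FreeLt 0) :
    (var (k + n)).substList k σ = σ[n] := by
  induction σ generalizing n with
  | nil => simp at hn
  | cons P σ ih =>
    simp only [List.mem_cons, forall_eq_or_imp] at hσ
    rw [substList_cons]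
    cases n with
    | zero => simpa [subst] using substList_eq_self (hσ.1.mono (Nat.zero_le k))
    | succ n =>
      have : (var (k + (n + 1))).subst k P = var (k + n) := by
        simp [subst, show k + (n + 1) - 1 = k + n by omega]
      simpa [this] using ih (Nat.lt_of_succ_lt_succ hn) hσ.2

theorem FreeLt.substList {M : Tm Loc Ch} (hM : M.FreeLt (k + σ.length))
    (hσ : ∀ P ∈ σ, P.FreeLt 0) : (M.substList k σ).FreeLt k := by
  induction σ generalizing M with
  | nil => exact hM
  | cons P σ ih =>
    simp only [List.mem_cons, forall_eq_or_imp] at hσ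
    have hM' : M.FreeLt (k + σ.length + 1) := by simpa [Nat.add_assoc] using hM
    exact ih (hM'.subst hσ.1 (Nat.le_add_right k _)) hσ.2

end Tm

theorem Typing.freeLt {Γ : List (Ty Loc Ch)} {M : Tm Loc Ch} {t : Ty Loc Ch}
    (h : Typing Γ M t) : M.FreeLt Γ.length := by
  induction h with
  | var Γ n t h => exact (List.getElem?_eq_some_iff.mp h).1
  | choice => trivial
  | push _ _ _ _ _ _ _ _ _ ihN ihM | caseOf _ _ _ _ _ _ _ _ _ ihN ihM => exact ⟨ihN, ihM⟩
  | pop _ _ _ _ _ _ _ ih | loop _ _ _ _ _ _ _ ih | expand _ _ _ _ _ _ ih | incl _ _ _ _ _ _ _ ih =>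
    exact ih

attribute [reducible] Mem

namespace Mem

instance : Append (Mem Loc Ch) := ⟨fun P R a => P a ++ R a⟩

@[simp] theorem append_apply (P R : Mem Loc Ch) (a : Loc) : (P ++ R) a = P a ++ R a := rfl

theorem append_assoc (P Q R : Mem Loc Ch) : P ++ Q ++ R = P ++ (Q ++ R) :=
  funext fun a => List.append_assoc (P a) (Q a) (R a)

theorem push_append (P R : Mem Loc Ch) (a : Loc) (N : Tm Loc Ch) :
    P.push a N ++ R = (P ++ R).push a N := by
  funext b
  by_cases hb : b = a
  · subst hb; simp [push]
  · simp [push, Function.update_of_ne hb]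

theorem update_nil_append (P R : Mem Loc Ch) (a : Loc) :
    Function.update P a [] ++ R = Function.update (P ++ R) a (R a) := by
  funext b
  by_cases hb : b = a
  · subst hb; simp
  · simp [Function.update_of_ne hb]

theorem update_nil_append_update (P R : Mem Loc Ch) (a : Loc) (L : List (Tm Loc Ch)) :
    Function.update P a [] ++ Function.update R a L = Function.update (P ++ R) a L := by
  funext b
  by_cases hb : b = a
  · subst hb; simp
  · simp [Function.update_of_ne hb]

end Mem

mutual

/-- `RedStack` and `RedSum` are `List.Forall₂ Red` and its `Option` analogue, unfolded so that the
recursion through the nested types of `Ty` is structural. Quantifying over the untouched rest `R`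
of the memory is what makes the expansion rule sound. -/
def Red : Ty Loc Ch → Tm Loc Ch → Prop
  | .arr s T, M => M.FreeLt 0 ∧ ∀ P R : Mem Loc Ch, (∀ a, RedStack (s a) (P a)) →
      ∃ i Q, RedSum (T i) Q ∧ Eval (P ++ R) M (Q ++ R) i

def RedStack : StackTy Loc Ch → List (Tm Loc Ch) → Prop
  | [], Ns => Ns = []
  | r :: rs, Ns => ∃ N Ns', Red r N ∧ RedStack rs Ns' ∧ Ns = N :: Ns'

def RedSum : Option (MemTy Loc Ch) → Mem Loc Ch → Prop
  | none, _ => False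
  | some m, Q => ∀ a, RedStack (m a) (Q a)

end

theorem redStack_iff_forall₂ {rs : StackTy Loc Ch} {Ns : List (Tm Loc Ch)} :
    RedStack rs Ns ↔ List.Forall₂ Red rs Ns := by
  induction rs generalizing Ns with
  | nil => simp [RedStack]
  | cons r rs ih => simp [RedStack, List.forall₂_cons_left_iff, ih]

def RedMem (m : MemTy Loc Ch) (P : Mem Loc Ch) : Prop :=
  ∀ a, List.Forall₂ Red (m a) (P a)

theorem red_arr_iff {s : MemTy Loc Ch} {T : SumTy Loc Ch} {M : Tm Loc Ch} :
    Red (.arr s T) M ↔ M.FreeLt 0 ∧ ∀ P R : Mem Loc Ch, RedMem s P →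
      ∃ i m Q, T i = some m ∧ RedMem m Q ∧ Eval (P ++ R) M (Q ++ R) i := by
  have hsum : ∀ (o : Option (MemTy Loc Ch)) Q, RedSum o Q ↔ ∃ m, o = some m ∧ RedMem m Q := by
    rintro (_ | m) Q <;> simp [RedSum, RedMem, redStack_iff_forall₂]
  simp only [Red, RedMem, redStack_iff_forall₂, hsum, ← exists_and_right, and_assoc]
  exact and_congr_right fun _ => forall₃_congr fun _ _ _ => exists_congr fun _ => exists_comm

theorem Red.freeLt {t : Ty Loc Ch} {M : Tm Loc Ch} (h : Red t M) : M.FreeLt 0 := by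
  obtain ⟨s, T⟩ := t
  exact (red_arr_iff.mp h).1

theorem RedMem.push {r : Ty Loc Ch} {N : Tm Loc Ch} {s : MemTy Loc Ch} {P : Mem Loc Ch}
    (hN : Red r N) (hP : RedMem s P) (a : Loc) : RedMem (memCons a r s) (P.push a N) := by
  intro b
  by_cases hb : b = a
  · subst hb; simp [memCons, Mem.push, hN, hP b]
  · simpa [memCons, Mem.push, Function.update_of_ne hb] using hP b

theorem RedMem.exists_eq_push {a : Loc} {r : Ty Loc Ch} {s : MemTy Loc Ch} {P : Mem Loc Ch}
    (hP : RedMem (memCons a r s) P) : ∃ N P', Red r N ∧ RedMem s P' ∧ P = P'.push a N := by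
  obtain ⟨N, Ns, hN, hNs, hPa⟩ := List.forall₂_cons_left_iff.mp (by simpa [memCons] using hP a)
  refine ⟨N, Function.update P a Ns, hN, fun b => ?_, funext fun b => ?_⟩
  · by_cases hb : b = a
    · subst hb; simpa using hNs
    · simpa [memCons, Function.update_of_ne hb] using hP b
  · by_cases hb : b = a
    · subst hb; simp [Mem.push, hPa]
    · simp [Mem.push, Function.update_of_ne hb]

theorem RedMem.append {r s : MemTy Loc Ch} {P Q : Mem Loc Ch} (hP : RedMem r P)
    (hQ : RedMem s Q) : RedMem (memApp r s) (P ++ Q) :=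
  fun a => List.rel_append (hP a) (hQ a)

theorem RedMem.exists_eq_append {r s : MemTy Loc Ch} {P : Mem Loc Ch}
    (hP : RedMem (memApp r s) P) : ∃ P₁ P₂, RedMem r P₁ ∧ RedMem s P₂ ∧ P = P₁ ++ P₂ := by
  refine ⟨fun a => (P a).take (r a).length, fun a => (P a).drop (r a).length,
    fun a => ?_, fun a => ?_, funext fun a => (List.take_append_drop _ _).symm⟩
  · simpa [memApp] using List.forall₂_take (r a).length (hP a)
  · simpa [memApp] using List.forall₂_drop (r a).length (hP a)

section Compatibility

variable {r s : MemTy Loc Ch} {T : SumTy Loc Ch} {M N : Tm Loc Ch}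

theorem red_choice (i : Ch) : Red (.arr memNil (sumSingle i memNil)) (.choice i : Tm Loc Ch) :=
  red_arr_iff.mpr ⟨trivial, fun P R hP => ⟨i, memNil, P, by simp [sumSingle], hP, .choice _ i⟩⟩

theorem Red.push {t : Ty Loc Ch} {a : Loc} (hN : Red t N) (hM : Red (.arr (memCons a t s) T) M) :
    Red (.arr s T) (.push N a M) := by
  obtain ⟨hMc, hMrun⟩ := red_arr_iff.mp hM
  refine red_arr_iff.mpr ⟨⟨hN.freeLt, hMc⟩, fun P R hP => ?_⟩
  obtain ⟨i, m, Q, hm, hQ, hev⟩ := hMrun (P.push a N) R (hP.push hN a)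
  exact ⟨i, m, Q, hm, hQ, .push _ _ _ _ _ _ (Mem.push_append P R a N ▸ hev)⟩

theorem red_pop {t : Ty Loc Ch} {a : Loc} (hM : M.FreeLt 1)
    (hsubst : ∀ N, Red t N → Red (.arr s T) (M.subst 0 N)) :
    Red (.arr (memCons a t s) T) (.pop a M) := by
  refine red_arr_iff.mpr ⟨hM, fun P R hP => ?_⟩
  obtain ⟨N, P', hN, hP', rfl⟩ := hP.exists_eq_push
  obtain ⟨i, m, Q, hm, hQ, hev⟩ := (red_arr_iff.mp (hsubst N hN)).2 P' R hP'
  exact ⟨i, m, Q, hm, hQ, Mem.push_append P' R a N ▸ .pop _ _ _ _ _ _ hev⟩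

theorem Red.caseOf {i : Ch} (hM : Red (.arr r (Function.update T i (some s))) M)
    (hN : Red (.arr s T) N) : Red (.arr r T) (.caseOf M i N) := by
  obtain ⟨hMc, hMrun⟩ := red_arr_iff.mp hM
  obtain ⟨hNc, hNrun⟩ := red_arr_iff.mp hN
  refine red_arr_iff.mpr ⟨⟨hMc, hNc⟩, fun P R hP => ?_⟩
  obtain ⟨j, m, Q, hm, hQ, hev⟩ := hMrun P R hP
  by_cases hji : j = i
  · subst hji
    obtain rfl : s = m := by simpa using hm
    obtain ⟨k, m', Q', hm', hQ', hev'⟩ := hNrun Q R hQ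
    exact ⟨k, m', Q', hm', hQ', .case_eq _ _ _ _ _ _ _ hev hev'⟩
  · rw [Function.update_of_ne hji] at hm
    exact ⟨j, m, Q, hm, hQ, .case_ne _ _ _ _ _ _ hji hev⟩

theorem Red.expand (hM : Red (.arr r T) M) : Red (.arr (memApp r s) (sumExpand s T)) M := by
  obtain ⟨hMc, hMrun⟩ := red_arr_iff.mp hM
  refine red_arr_iff.mpr ⟨hMc, fun P R hP => ?_⟩
  obtain ⟨P₁, P₂, hP₁, hP₂, rfl⟩ := hP.exists_eq_append
  obtain ⟨i, m, Q, hm, hQ, hev⟩ := hMrun P₁ (P₂ ++ R) hP₁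
  refine ⟨i, memApp m s, Q ++ P₂, by simp [sumExpand, hm], hQ.append hP₂, ?_⟩
  rwa [Mem.append_assoc, Mem.append_assoc]

theorem Red.sumOver {U : SumTy Loc Ch} (hM : Red (.arr r T) M) : Red (.arr r (sumOver T U)) M := by
  obtain ⟨hMc, hMrun⟩ := red_arr_iff.mp hM
  refine red_arr_iff.mpr ⟨hMc, fun P R hP => ?_⟩
  obtain ⟨i, m, Q, hm, hQ, hev⟩ := hMrun P R hP
  exact ⟨i, m, Q, by simp [_root_.sumOver, hm], hQ, hev⟩

end Compatibility

theorem List.Forall₂.forall_freeLt_of_red {Γ : List (Ty Loc Ch)} {σ : List (Tm Loc Ch)}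
    (hσ : List.Forall₂ Red Γ σ) : ∀ N ∈ σ, N.FreeLt 0 := by
  induction hσ with
  | nil => simp
  | cons hN _ ih => simpa [hN.freeLt] using ih

theorem Typing.red_substList {Γ : List (Ty Loc Ch)} {M : Tm Loc Ch} {t : Ty Loc Ch}
    (h : Typing Γ M t) (hM : M.loopFree) {σ : List (Tm Loc Ch)} (hσ : List.Forall₂ Red Γ σ) :
    Red t (M.substList 0 σ) := by
  induction h generalizing σ with
  | var Γ n t h =>
    obtain ⟨hn, rfl⟩ := List.getElem?_eq_some_iff.mp h
    have hnσ : n < σ.length := hσ.length_eq ▸ hn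
    have hvar := Tm.substList_var (k := 0) hnσ hσ.forall_freeLt_of_red
    rw [Nat.zero_add] at hvar
    simpa [hvar] using hσ.get hn hnσ
  | choice Γ i => simpa using red_choice i
  | push Γ N r a M s T _ _ ihN ihM => simpa using (ihN hM.1 hσ).push (ihM hM.2 hσ)
  | pop Γ r a M s T hty ih =>
    have hσc := hσ.forall_freeLt_of_red
    rw [Tm.substList_pop a M hσc]
    refine red_pop ((hty.freeLt.mono ?_).substList hσc) fun N hN => ?_
    · simp [hσ.length_eq, Nat.add_comm]
    · rw [Tm.subst_substList M N hN.freeLt hσc]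
      exact ih hM (.cons hN hσ)
  | caseOf Γ M N i r s T _ _ ihM ihN => simpa using (ihM hM.1 hσ).caseOf (ihN hM.2 hσ)
  | loop => exact hM.elim
  | expand _ _ _ _ _ _ ih => exact (ih hM hσ).expand
  | incl _ _ _ _ _ _ _ ih => exact (ih hM hσ).sumOver

section Inhabitation

variable {K : Tm Loc Ch} {a : Loc}

def Tm.pushesAt (a : Loc) (L : List (Tm Loc Ch)) (K : Tm Loc Ch) : Tm Loc Ch :=
  L.foldl (fun K N => .push N a K) K

theorem Tm.FreeLt.pushesAt {L : List (Tm Loc Ch)} (hL : ∀ N ∈ L, N.FreeLt 0) (hK : K.FreeLt 0) :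
    (Tm.pushesAt a L K).FreeLt 0 := by
  induction L generalizing K with
  | nil => exact hK
  | cons N L ih =>
    simp only [List.mem_cons, forall_eq_or_imp] at hL
    exact ih hL.2 (show (Tm.push N a K).FreeLt 0 from ⟨hL.1, hK⟩)

theorem Tm.FreeLt.iterate_pop {k n : ℕ} (hK : K.FreeLt k) : ((Tm.pop a)^[n] K).FreeLt k := by
  induction n generalizing K with
  | zero => exact hK
  | succ n ih => exact ih (show (Tm.pop a K).FreeLt k from hK.mono (Nat.le_succ k))

theorem Eval.pushesAt {S T : Mem Loc Ch} {i : Ch} {L : List (Tm Loc Ch)}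
    (h : Eval (Function.update S a (L ++ S a)) K T i) : Eval S (Tm.pushesAt a L K) T i := by
  induction L generalizing K with
  | nil => simpa [Tm.pushesAt] using h
  | cons N L ih =>
    refine ih (.push _ _ _ _ _ _ ?_)
    convert h using 1
    funext b
    by_cases hb : b = a
    · subst hb; simp [Mem.push]
    · simp [Mem.push, Function.update_of_ne hb]

theorem Eval.iterate_pop {S T : Mem Loc Ch} {i : Ch} (hK : K.FreeLt 0) (h : Eval S K T i)
    (L : List (Tm Loc Ch)) : Eval (Function.update S a (L ++ S a)) ((Tm.pop a)^[L.length] K) T i := by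
  induction L with
  | nil => simpa using h
  | cons N L ih =>
    rw [List.length_cons, Function.iterate_succ_apply']
    convert Eval.pop _ a N _ _ i ((Tm.subst_eq_self N hK.iterate_pop le_rfl).symm ▸ ih) using 1
    funext b
    by_cases hb : b = a
    · subst hb; simp [Mem.push]
    · simp [Mem.push, Function.update_of_ne hb]

theorem exists_replaceTop_of_subset (hK : K.FreeLt 0) (F : Finset Loc) (n : Loc → ℕ)
    (Q : Mem Loc Ch) (hF : ∀ a ∉ F, n a = 0 ∧ Q a = []) (hQ : ∀ a, ∀ N ∈ Q a, N.FreeLt 0) :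
    ∃ K', K'.FreeLt 0 ∧ ∀ P R T i, (∀ a, (P a).length = n a) →
      Eval (Q ++ R) K T i → Eval (P ++ R) K' T i := by
  induction F using Finset.induction_on generalizing n Q with
  | empty =>
    refine ⟨K, hK, fun P R T i hP h => ?_⟩
    have hPQ : P ++ R = Q ++ R := funext fun a => by
      have hP0 : P a = [] := List.eq_nil_of_length_eq_zero ((hP a).trans (hF a (by simp)).1)
      simp [hP0, (hF a (by simp)).2]
    rwa [hPQ]
  | insert a F haF ih =>
    obtain ⟨K', hK', hrun⟩ := ih (Function.update n a 0) (Function.update Q a [])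
      (fun b hb => by grind) (fun b N hN => hQ b N (by grind))
    refine ⟨(Tm.pop a)^[n a] (Tm.pushesAt a (Q a) K'), (hK'.pushesAt (hQ a)).iterate_pop,
      fun P R T i hP h => ?_⟩
    have hpush : Eval (Function.update P a [] ++ R) (Tm.pushesAt a (Q a) K') T i := by
      refine Eval.pushesAt ?_
      convert hrun (Function.update P a []) (Function.update R a (Q a ++ R a)) T i
        (fun b => ?_) ?_ using 1
      · rw [Mem.update_nil_append_update]
        simp [Mem.update_nil_append]
      · by_cases hb : b = a
        · subst hb; simp
        · simp [Function.update_of_ne hb, hP b]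
      · rwa [Mem.update_nil_append_update, ← Mem.append_apply, Function.update_eq_self]
    convert Eval.iterate_pop (a := a) (hK'.pushesAt (hQ a)) hpush (P a) using 1
    · simp [Mem.update_nil_append]
    · rw [hP a]

theorem exists_replaceTop (hK : K.FreeLt 0) (n : Loc → ℕ) (hn : (Function.support n).Finite)
    (Q : Mem Loc Ch) (hQfin : {a | Q a ≠ []}.Finite) (hQ : ∀ a, ∀ N ∈ Q a, N.FreeLt 0) :
    ∃ K', K'.FreeLt 0 ∧ ∀ P R T i, (∀ a, (P a).length = n a) →
      Eval (Q ++ R) K T i → Eval (P ++ R) K' T i :=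
  exists_replaceTop_of_subset hK (hn.toFinset ∪ hQfin.toFinset) n Q
    (fun a ha => by simpa [not_or] using ha) hQ

end Inhabitation

theorem exists_redMem {m : MemTy Loc Ch} (h : ∀ a, ∀ t ∈ m a, ∃ N, Red t N) :
    ∃ Q, RedMem m Q := by
  have : Nonempty (Tm Loc Ch) := ⟨.var 0⟩
  choose! f hf using h
  exact ⟨fun a => (m a).map (f a),
    fun a => List.forall₂_map_right_iff.mpr (List.forall₂_same.mpr (hf a))⟩

theorem TyOK.exists_red {t : Ty Loc Ch} (ht : TyOK t) : ∃ M, Red t M := by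
  induction ht with
  | arr s T hs _ hT _ hTfin _ _ ih =>
    obtain ⟨i, m, hm⟩ : ∃ i m, T i = some m := by
      obtain ⟨i, hi⟩ := hT
      exact ⟨i, Option.ne_none_iff_exists'.mp hi⟩
    obtain ⟨Q, hQ⟩ := exists_redMem (ih i m hm)
    obtain ⟨K, hK, hrun⟩ := exists_replaceTop (show (Tm.choice i : Tm Loc Ch).FreeLt 0 from trivial)
      (fun a => (s a).length) (hs.subset fun a ha => by simpa using ha)
      Q ((hTfin i m hm).subset fun a hQa hma => hQa (by simpa [hma] using hQ a))
      (fun a => (hQ a).forall_freeLt_of_red)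
    exact ⟨K, red_arr_iff.mpr ⟨hK, fun P R hP =>
      ⟨i, m, Q, hm, hQ, hrun P R _ i (fun a => ((hP a).length_eq).symm) (.choice _ i)⟩⟩⟩

/-- Machine termination: any loop-free term, typed in the empty context with
a zero-free type, is terminating. -/
theorem machine_termination (M : Tm Loc Ch) (t : Ty Loc Ch)
    (hM : M.loopFree) (ht : TyOK t) (hty : Typing [] M t) :
    ∃ (S T : Mem Loc Ch) (i : Ch), Eval S M T i := by
  obtain ⟨s, T, -, hs, -, -, -, -⟩ := ht
  obtain ⟨P, hP⟩ := exists_redMem fun a r hr => (hs a r hr).exists_red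
  obtain ⟨i, -, Q, -, -, hev⟩ := (red_arr_iff.mp (hty.red_substList hM .nil)).2 P Mem.empty hP
  exact ⟨_, _, i, hev⟩
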